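/- Let n ≥ 0 and let H_n = {(s/3^n, t/3^n) : (s,t) ∈ H₀} be the copy of H₀ scaled by the factor 3^{-n}. Then every point (s,t) ∈ H_n admits balanced ternary representations a of s and b of t such that a_j = b_j = 0 for all j ≤ n, and either a_{n+1} · b_{n+1} = 0 or a_{n+1} + b_{n+1} = 0. -/

import Mathlib

open scoped Pointwise

/-- `a : ℕ+ → ℤ` is a balanced ternary representation of `t ∈ [-1/2,1/2]`:
all digits are in `{-1,0,1}` and `t = ∑_{j=1}^∞ a_j 3^{-j}`. -/
def IsBalTernRep (a : ℕ+ → ℤ) (t : ℝ) : Prop :=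
  (∀ j : ℕ+, a j = -1 ∨ a j = 0 ∨ a j = 1) ∧ t = ∑' j : ℕ+, (a j : ℝ) / 3 ^ (j : ℕ)

/-- The initial hexagon `H₀`: the square `[-1/2,1/2]²` with the two corner
squares `(1/6,1/2] × (1/6,1/2]` and `[-1/2,-1/6) × [-1/2,-1/6)` removed. -/
def H0 : Set (ℝ × ℝ) :=
  {p | |p.1| ≤ 1 / 2 ∧ |p.2| ≤ 1 / 2 ∧
    ¬(p.1 > 1 / 6 ∧ p.2 > 1 / 6) ∧ ¬(p.1 < -(1 / 6) ∧ p.2 < -(1 / 6))}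

/-- The seven translation vectors used to build the hexagon snowflake fractal. -/
def V : Set (ℝ × ℝ) :=
  {(0, 0), (1 / 3, 0), (0, 1 / 3), (1 / 3, -(1 / 3)), (-(1 / 3), 0), (0, -(1 / 3)),
    (-(1 / 3), 1 / 3)}

/-- The decreasing sequence of sets whose intersection is the hexagon snowflake fractal. -/
noncomputable def G : ℕ → Set (ℝ × ℝ)
  | 0 => H0
  | n + 1 => ⋃ v ∈ V, (fun p => p + v) '' ((1 / 3 : ℝ) • G n)

/-- The hexagon snowflake fractal. -/
noncomputable def SF : Set (ℝ × ℝ) := ⋂ n, G n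


lemma hasSum_ones : HasSum (fun j : ℕ => (if j = 0 then (0:ℝ) else 1/3^j)) (1/2) := by
  have h : HasSum (fun j : ℕ => ((1:ℝ)/3)^(j+1)) (1/2) := by
    have := (hasSum_geometric_of_lt_one (r := (1:ℝ)/3) (by norm_num) (by norm_num)).mul_left (1/3)
    have e : (1/3 : ℝ) * (1 - 1/3)⁻¹ = 1/2 := by norm_num
    rw [e] at this
    convert this using 2 with j
    · rfl
    ring
  have h2 := (hasSum_nat_add_iff (f := fun j : ℕ => (if j = 0 then (0:ℝ) else 1/3^j)) (g := 1/2) 1).mp ?_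
  · simpa using h2
  · convert h using 2 with j
    · rfl
    simp [div_pow]


/-- base-3 digit expansion for x ∈ [0,1): digits d with d 0 = 0, d j ∈ {0,1,2}, sum d j/3^j = x -/
lemma exists_digits (x : ℝ) (h0 : 0 ≤ x) (h1 : x < 1) :
    ∃ d : ℕ → ℤ, d 0 = 0 ∧ (∀ j, 0 ≤ d j ∧ d j ≤ 2) ∧
      HasSum (fun j => (d j : ℝ)/3^j) x := by
  set F : ℕ → ℤ := fun j => ⌊(3:ℝ)^j * x⌋ with hF
  have hF0 : F 0 = 0 := by simp [hF, Int.floor_eq_zero_iff, Set.mem_Ico, h0, h1]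
  set d : ℕ → ℤ := fun j => if j = 0 then 0 else F j - 3 * F (j-1) with hd
  have hdz : d 0 = 0 := by simp [hd]
  have hds : ∀ j, d (j+1) = F (j+1) - 3 * F j := by intro j; simp [hd]
  have hFb : ∀ j, 3 * F j ≤ F (j+1) ∧ F (j+1) ≤ 3 * F j + 2 := by
    intro j
    have h3 : (3:ℝ)^(j+1) * x = 3 * ((3:ℝ)^j * x) := by ring
    constructor
    · apply Int.le_floor.mpr
      rw [h3]; push_cast
      have := Int.floor_le ((3:ℝ)^j * x)
      linarith
    · have : F (j+1) < 3 * F j + 3 := by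
        apply Int.floor_lt.mpr
        rw [h3]; push_cast
        have := Int.lt_floor_add_one ((3:ℝ)^j * x)
        linarith
      omega
  have hdr : ∀ j, 0 ≤ d j ∧ d j ≤ 2 := by
    intro j; cases j with
    | zero => simp [hdz]
    | succ j => rw [hds]; have := hFb j; omega
  refine ⟨d, hdz, hdr, ?_⟩
  have hpart : ∀ N : ℕ, ∑ j ∈ Finset.range (N+1), (d j : ℝ)/3^j = (F N : ℝ)/3^N := by
    intro N
    induction N with
    | zero => simp [hdz, hF0]
    | succ N ih =>
      rw [Finset.sum_range_succ, ih, hds]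
      push_cast
      field_simp
      ring
  have hsummable : Summable (fun j => (d j : ℝ)/3^j) := by
    have hg : Summable (fun j : ℕ => 2 * (1/3:ℝ)^j) :=
      (summable_geometric_of_lt_one (by norm_num) (by norm_num)).mul_left 2
    refine Summable.of_nonneg_of_le (fun j => ?_) (fun j => ?_) hg
    · have h := (hdr j).1
      have h' : (0:ℝ) ≤ (d j : ℝ) := by exact_mod_cast h
      positivity
    · have h2 : ((d j : ℝ)) ≤ 2 := by exact_mod_cast (hdr j).2
      have h3 : (0:ℝ) < 3^j := by positivity
      rw [div_le_iff₀ h3, div_pow, one_pow]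
      have e : (2:ℝ) * (1 / 3 ^ j) * 3 ^ j = 2 := by field_simp
      rw [e]; exact h2
  rw [hsummable.hasSum_iff_tendsto_nat]
  have key : Filter.Tendsto (fun N => (F N : ℝ)/3^N) Filter.atTop (nhds x) := by
    have hup : ∀ N, x - (1/3:ℝ)^N ≤ (F N : ℝ)/3^N := by
      intro N
      have h3 : (0:ℝ) < 3^N := by positivity
      rw [le_div_iff₀ h3]
      have := Int.lt_floor_add_one ((3:ℝ)^N * x)
      have e : (1/3:ℝ)^N * 3^N = 1 := by rw [div_pow, one_pow]; field_simp
      nlinarith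
    have hlo : ∀ N, (F N : ℝ)/3^N ≤ x := by
      intro N
      have h3 : (0:ℝ) < 3^N := by positivity
      rw [div_le_iff₀ h3]
      have := Int.floor_le ((3:ℝ)^N * x)
      nlinarith
    have t1 : Filter.Tendsto (fun N => x - (1/3:ℝ)^N) Filter.atTop (nhds (x - 0)) :=
      tendsto_const_nhds.sub (tendsto_pow_atTop_nhds_zero_of_lt_one (by norm_num) (by norm_num))
    rw [sub_zero] at t1
    exact tendsto_of_tendsto_of_tendsto_of_le_of_le t1 tendsto_const_nhds hup hlo
  -- partial sums over range N vs range (N+1)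
  have := key.comp (Filter.tendsto_add_atTop_nat 1)
  have heq : (fun N => ∑ j ∈ Finset.range N, (d j : ℝ)/3^j) ∘ (· + 1) = fun N => (F N : ℝ)/3^N := by
    funext N; exact hpart N
  have := key
  rw [show (fun N => ∑ j ∈ Finset.range N, (d j : ℝ)/3^j) ∘ (· + 1)
      = fun N => (F N : ℝ)/3^N from heq] at *
  exact (Filter.tendsto_add_atTop_iff_nat 1).mp (by rw [show (fun N => ∑ j ∈ Finset.range (N+1), (d j : ℝ)/3^j) = fun N => (F N:ℝ)/3^N from funext hpart]; exact key)

/-- balanced ternary over ℕ for u ∈ [-1/2, 1/2] -/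
lemma exists_repNat (u : ℝ) (hu : |u| ≤ 1/2) :
    ∃ f : ℕ → ℤ, f 0 = 0 ∧ (∀ j, f j = -1 ∨ f j = 0 ∨ f j = 1) ∧
      HasSum (fun j => (f j : ℝ)/3^j) u := by
  rw [abs_le] at hu
  rcases eq_or_lt_of_le hu.2 with he | hl
  · refine ⟨fun j => if j = 0 then 0 else 1, by simp,
      fun j => by by_cases hj : j = 0 <;> simp [hj], ?_⟩
    have h2 := hasSum_ones
    rw [he]
    convert h2 using 2 with j
    by_cases hj : j = 0 <;> simp [hj]
  · obtain ⟨d, hd0, hdr, hds⟩ := exists_digits (u + 1/2) (by linarith [hu.1]) (by linarith)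
    refine ⟨fun j => if j = 0 then 0 else d j - 1, by simp, ?_, ?_⟩
    · intro j
      by_cases hj : j = 0
      · simp [hj]
      · have := hdr j; simp only [hj, if_false]; omega
    · have h2 := hds.sub hasSum_ones
      have e : u + 1/2 - 1/2 = u := by ring
      rw [e] at h2
      convert h2 using 2 with j
      · rfl
      by_cases hj : j = 0
      · simp [hj, hd0]
      · simp only [hj, if_false]
        push_cast
        ring

/-- shift by n+1 and prepend digit v -/
lemma hasSum_dig (n : ℕ) (v : ℤ) (f : ℕ → ℤ) (hf0 : f 0 = 0) (x : ℝ)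
    (hf : HasSum (fun j => (f j : ℝ)/3^j) x) :
    HasSum (fun k => ((if k ≤ n then 0 else if k = n+1 then v else f (k - (n+1))) : ℝ)/3^k)
      (((v:ℝ) + x)/3^(n+1)) := by
  have hg : HasSum (fun j : ℕ => ((if j = 0 then v else f j : ℤ) : ℝ)/3^j) ((v:ℝ) + x) := by
    have h1 : HasSum (fun j : ℕ => if j = 0 then (v:ℝ) else 0) (v:ℝ) := hasSum_ite_eq 0 (v:ℝ)
    have := h1.add hf
    convert this using 2 with j
    by_cases hj : j = 0 <;> simp [hj, hf0]
  have hinj : Function.Injective (fun j : ℕ => j + (n+1)) := fun a b h => by simpa using h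
  have hvan : ∀ k ∉ Set.range (fun j : ℕ => j + (n+1)),
      ((if k ≤ n then 0 else if k = n+1 then v else f (k - (n+1))) : ℝ)/3^k = 0 := by
    intro k hk
    have : k ≤ n := by
      by_contra hc
      exact hk ⟨k - (n+1), by simp; omega⟩
    simp [this]
  rw [← hinj.hasSum_iff hvan]
  have hm := hg.mul_right ((1/3:ℝ)^(n+1))
  convert hm using 1
  · rfl
  swap
  · rw [div_pow, one_pow]; ring
  funext j
  simp only [Function.comp]
  have h1 : ¬ (j + (n+1) ≤ n) := by omega
  by_cases hj : j = 0
  · simp only [hj, if_pos rfl, zero_add, if_neg (by omega : ¬ (n+1 ≤ n)), if_pos rfl, if_true]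
    rw [div_pow, one_pow]
    field_simp
  · have h2 : j + (n + 1) ≠ n + 1 := by omega
    simp only [if_neg h1, if_neg h2, hj, if_false, show j + (n+1) - (n+1) = j from by omega]
    rw [div_pow, one_pow, pow_add]
    field_simp

lemma exists_rep_pnat (n : ℕ) (v : ℤ) (hv : v = -1 ∨ v = 0 ∨ v = 1) (s0 : ℝ)
    (hs : |3 * s0 - v| ≤ 1/2) :
    ∃ a : ℕ+ → ℤ, IsBalTernRep a (s0 / 3 ^ n) ∧ (∀ j : ℕ+, (j : ℕ) ≤ n → a j = 0) ∧
      a ⟨n + 1, n.succ_pos⟩ = v := by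
  obtain ⟨f, hf0, hfr, hfs⟩ := exists_repNat (3 * s0 - v) hs
  set g : ℕ → ℤ := fun k => if k ≤ n then 0 else if k = n+1 then v else f (k - (n+1)) with hg
  have hgs : HasSum (fun k => (g k : ℝ)/3^k) (s0 / 3^n) := by
    have := hasSum_dig n v f hf0 _ hfs
    have e : ((v:ℝ) + (3 * s0 - v))/3^(n+1) = s0 / 3^n := by
      rw [pow_succ]
      field_simp
      ring
    rw [e] at this
    convert this using 2 with k
    simp only [hg, apply_ite (fun z : ℤ => (z:ℝ))]
    norm_num
  have hps : HasSum (fun j : ℕ+ => (g (j:ℕ) : ℝ)/3^(j:ℕ)) (s0 / 3^n) := by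
    have hvan : ∀ k ∉ Set.range (PNat.val), (g k : ℝ)/3^k = 0 := by
      intro k hk
      have hk0 : k = 0 := by
        by_contra hc
        exact hk ⟨⟨k, Nat.pos_of_ne_zero hc⟩, rfl⟩
      simp [hk0, hg]
    exact (Function.Injective.hasSum_iff (fun a b h => PNat.coe_injective h) hvan).mpr hgs
  refine ⟨fun j => g j, ⟨?_, hps.tsum_eq.symm⟩, ?_, ?_⟩
  · intro j
    simp only [hg]
    split
    · tauto
    split
    · tauto
    · exact hfr _
  · intro j hj
    simp [hg, hj]
  · simp [hg]


lemma digit_choice (s0 : ℝ) (hs : |s0| ≤ 1/2) :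
    ∃ v : ℤ, (v = -1 ∨ v = 0 ∨ v = 1) ∧ |3 * s0 - v| ≤ 1/2 ∧
      (v = 1 → s0 > 1/6) ∧ (v = -1 → s0 < -(1/6)) := by
  rw [abs_le] at hs
  by_cases h1 : s0 > 1/6
  · exact ⟨1, by norm_num, by rw [abs_le]; push_cast; constructor <;> linarith [hs.2],
      fun _ => h1, by norm_num⟩
  by_cases h2 : s0 < -(1/6)
  · exact ⟨-1, by norm_num, by rw [abs_le]; push_cast; constructor <;> linarith [hs.1],
      by norm_num, fun _ => h2⟩
  · exact ⟨0, by norm_num, by rw [abs_le]; push_cast; push_neg at h1 h2; constructor <;> linarith,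
      by norm_num, by norm_num⟩

theorem stmt10 (n : ℕ) (s t : ℝ)
    (h : (s, t) ∈ (fun p : ℝ × ℝ => ((1 / 3 : ℝ) ^ n) • p) '' H0) :
    ∃ a b : ℕ+ → ℤ, IsBalTernRep a s ∧ IsBalTernRep b t ∧
      (∀ j : ℕ+, (j : ℕ) ≤ n → a j = 0 ∧ b j = 0) ∧
      (a ⟨n + 1, n.succ_pos⟩ * b ⟨n + 1, n.succ_pos⟩ = 0 ∨
        a ⟨n + 1, n.succ_pos⟩ + b ⟨n + 1, n.succ_pos⟩ = 0) := by
  obtain ⟨p, hp, hpe⟩ := h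
  obtain ⟨hp1, hp2, hp3, hp4⟩ := hp
  have hs : s = p.1 / 3 ^ n := by
    have := congrArg Prod.fst hpe
    simp only [Prod.smul_fst, smul_eq_mul] at this
    rw [← this, div_pow, one_pow]
    ring
  have ht : t = p.2 / 3 ^ n := by
    have := congrArg Prod.snd hpe
    simp only [Prod.smul_snd, smul_eq_mul] at this
    rw [← this, div_pow, one_pow]
    ring
  obtain ⟨va, hva, hva2, hva3, hva4⟩ := digit_choice p.1 (by linarith [hp1])
  obtain ⟨vb, hvb, hvb2, hvb3, hvb4⟩ := digit_choice p.2 (by linarith [hp2])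
  obtain ⟨a, ha, ha0, ha1⟩ := exists_rep_pnat n va hva p.1 hva2
  obtain ⟨b, hb, hb0, hb1⟩ := exists_rep_pnat n vb hvb p.2 hvb2
  refine ⟨a, b, by rwa [hs], by rwa [ht], fun j hj => ⟨ha0 j hj, hb0 j hj⟩, ?_⟩
  rw [ha1, hb1]
  have hna : ¬(va = 1 ∧ vb = 1) := fun ⟨x1, x2⟩ => hp3 ⟨hva3 x1, hvb3 x2⟩
  have hnb : ¬(va = -1 ∧ vb = -1) := fun ⟨x1, x2⟩ => hp4 ⟨hva4 x1, hvb4 x2⟩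
  rcases hva with h|h|h <;> rcases hvb with h'|h'|h' <;> subst h <;> subst h' <;> simp_all <;> omega
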